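/- Let F be a vector space over a field K, let T : F → F be a surjective linear map, and let B ≤ F* be a finite-dimensional subspace. Then (T(B^⊥))^⊥ = (T*)^{-1}(B), i.e., a functional φ ∈ F* annihilates T(B^⊥) if and only if φ ∘ T ∈ B. -/

import Mathlib

theorem Submodule.dualAnnihilator_map_eq_comap_dualMap {R M N : Type*} [CommSemiring R]
    [AddCommMonoid M] [Module R M] [AddCommMonoid N] [Module R N]
    (f : M →ₗ[R] N) (W : Submodule R M) :
    (W.map f).dualAnnihilator = W.dualAnnihilator.comap f.dualMap := by
  ext φ
  simp only [mem_dualAnnihilator, mem_comap, LinearMap.dualMap_apply]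
  exact ⟨fun h w hw ↦ h _ (mem_map_of_mem hw), by rintro h _ ⟨w, hw, rfl⟩; exact h w hw⟩

theorem stmt8_general {K F : Type*} [Field K] [AddCommGroup F] [Module K F]
    (T : F →ₗ[K] F)
    (B : Submodule K (Module.Dual K F)) (hB : FiniteDimensional K B) :
    (Submodule.map T B.dualCoannihilator).dualAnnihilator =
      Submodule.comap T.dualMap B := by
  rw [Submodule.dualAnnihilator_map_eq_comap_dualMap,
    Subspace.dualCoannihilator_dualAnnihilator_eq]

/-- For a surjective linear map T : F → F and a finite-dimensional subspace
B ≤ F*, one has (T(B^⊥))^⊥ = (T*)^{-1}(B). -/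
theorem stmt8 {K F : Type*} [Field K] [AddCommGroup F] [Module K F]
    (T : F →ₗ[K] F) (hT : Function.Surjective T)
    (B : Submodule K (Module.Dual K F)) (hB : FiniteDimensional K B) :
    (Submodule.map T B.dualCoannihilator).dualAnnihilator =
      Submodule.comap T.dualMap B :=
  stmt8_general T B hB
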